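/- Let P_{XY} and Q_{XY} be pmfs on a finite alphabet 𝒳 × 𝒴 such that Q_{XY} = P_X · Q_{Y|X}, i.e. X has the same marginal under both, and let S be a random variable over finite 𝒮 with conditional law P_{S|X}, jointly distributed with (X,Y) ∼ P_{XY} via S → X → Y. Suppose there is a function f: 𝒴 → 𝒵 such that under Q, X → f(Y) → Y is a Markov chain, and the joint law of (X, f(Y)) is the same under P_{XY} and Q_{XY}. Then Σ_x P_{S|X}(s|x)·Q_{XY}(x,y) = P_{S|f(Y)}(s|f(y))·Q_Y(y) for all s ∈ 𝒮, y ∈ 𝒴, where P_{S|f(Y)} is computed under the P-distribution. -/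
import Mathlib


open Real Finset

/-- let `P_{XY}` and `Q_{XY}` be pmfs on `𝒳 × 𝒴` with the same
`X`-marginal, `P_{S|X}` a conditional pmf and `f : 𝒴 → 𝒵` such that under `Q`
the chain `X → f(Y) → Y` is Markov and the joint law of `(X,f(Y))` agrees under
`P` and `Q`.  Then `Σ_x P_{S|X}(s|x)·Q_{XY}(x,y) = P_{S|f(Y)}(s|f(y))·Q_Y(y)`,
where `P_{S|f(Y)}` is computed under `P`. -/
theorem stmt15 {X Y S Z : Type*} [Fintype X] [Fintype Y] [Fintype S] [Fintype Z]
    [DecidableEq Z]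
    (P Q : X → Y → ℝ) (PSX : S → X → ℝ) (f : Y → Z)
    (hPnn : ∀ x y, 0 ≤ P x y) (hPsum : ∑ x, ∑ y, P x y = 1)
    (hQnn : ∀ x y, 0 ≤ Q x y) (hQsum : ∑ x, ∑ y, Q x y = 1)
    (hPSXnn : ∀ s x, 0 ≤ PSX s x) (hPSXsum : ∀ x, ∑ s, PSX s x = 1)
    -- P and Q have the same X-marginal:
    (hmargX : ∀ x, ∑ y, P x y = ∑ y, Q x y)
    -- under Q, X → f(Y) → Y is a Markov chain:
    (hmarkovQ : ∀ x y,
      Q x y * (∑ y' ∈ univ.filter fun y' => f y' = f y, ∑ x', Q x' y')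
        = (∑ y' ∈ univ.filter fun y' => f y' = f y, Q x y') * (∑ x', Q x' y))
    -- the joint law of (X, f(Y)) is the same under P and Q:
    (hsamejoint : ∀ x z,
      (∑ y ∈ univ.filter fun y' => f y' = z, P x y)
        = ∑ y ∈ univ.filter fun y' => f y' = z, Q x y) :
    ∀ s y, ∑ x, PSX s x * Q x y
      = ((∑ x, ∑ y' ∈ univ.filter fun y'' => f y'' = f y, PSX s x * P x y')
          / (∑ x, ∑ y' ∈ univ.filter fun y'' => f y'' = f y, P x y'))
        * (∑ x, Q x y) := by
  intro s y
  set A : ℝ := ∑ y' ∈ univ.filter fun y' => f y' = f y, ∑ x', Q x' y' with hA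
  have hDA : (∑ x, ∑ y' ∈ univ.filter fun y'' => f y'' = f y, P x y') = A := by
    simp_rw [hsamejoint]
    rw [Finset.sum_comm]
  rw [hDA]
  by_cases hA0 : A = 0
  · have hQy : ∀ x, Q x y = 0 := by
      intro x
      have hy : (∑ x', Q x' y) = 0 := by
        have hle : (∑ x', Q x' y) ≤ A := by
          rw [hA]
          exact Finset.single_le_sum (f := fun y' => ∑ x', Q x' y')
            (fun y' _ => Finset.sum_nonneg fun x' _ => hQnn x' y')
            (by simp)
        have hge : 0 ≤ ∑ x', Q x' y := Finset.sum_nonneg fun x' _ => hQnn x' y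
        linarith
      have := (Finset.sum_eq_zero_iff_of_nonneg
        (fun x' _ => hQnn x' y)).mp hy x (Finset.mem_univ x)
      exact this
    simp [hQy]
  · rw [div_mul_eq_mul_div, eq_div_iff hA0]
    calc (∑ x, PSX s x * Q x y) * A
        = ∑ x, PSX s x * (Q x y * A) := by rw [Finset.sum_mul]; exact Finset.sum_congr rfl fun x _ => mul_assoc _ _ _
      _ = ∑ x, PSX s x * ((∑ y' ∈ univ.filter fun y' => f y' = f y, Q x y')
            * (∑ x', Q x' y)) := by
          refine Finset.sum_congr rfl fun x _ => ?_
          rw [hA, hmarkovQ x y]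
      _ = ∑ x, (∑ y' ∈ univ.filter fun y'' => f y'' = f y, PSX s x * P x y')
            * (∑ x', Q x' y) := by
          refine Finset.sum_congr rfl fun x _ => ?_
          rw [← Finset.mul_sum, ← hsamejoint x (f y)]
          ring
      _ = (∑ x, ∑ y' ∈ univ.filter fun y'' => f y'' = f y, PSX s x * P x y')
            * ∑ x, Q x y := by rw [Finset.sum_mul]
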